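/- arXiv:1503.04517 — 5 statements merged into one kernel-verified Lean document; each statement's English description precedes it below -/
import Mathlib

section
/- The polynomial φ(t) = t^22 − 993t^21 − 1152t^20 − 123t^19 + 924t^18 + 584t^17 − 500t^16 − 1022t^15 − 661t^14 + 105t^13 + 476t^12 + 878t^11 + 476t^10 + 105t^9 − 661t^8 − 1022t^7 − 500t^6 + 584t^5 + 924t^4 − 123t^3 − 1152t^2 − 993t + 1 has exactly one real root λ with λ > 1, and this root satisfies 994.158 < λ < 994.159. -/
/-! On `(1, 994.158]` every positive-coefficient monomial of `φ` is absorbed into a neighbouring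
monomial of higher degree with negative coefficient, and what is left is negative because the
dominant part `x^20 (x^2 - 993x - 1152)` vanishes only at `994.1587…`. On `[994.158, ∞)` the
derivative is dominated by `22x^21` in the same way, so `φ` is strictly increasing there, and a
sign change between `994.158` and `994.159` gives exactly one root. -/

open Polynomial

/-- The Salem polynomial of degree 22 arising from the supersingular K3 surface in
characteristic 7 with Artin invariant 1. -/
noncomputable def φ : Polynomial ℤ :=
  X ^ 22 - 993 * X ^ 21 - 1152 * X ^ 20 - 123 * X ^ 19 + 924 * X ^ 18 + 584 * X ^ 17
    - 500 * X ^ 16 - 1022 * X ^ 15 - 661 * X ^ 14 + 105 * X ^ 13 + 476 * X ^ 12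
    + 878 * X ^ 11 + 476 * X ^ 10 + 105 * X ^ 9 - 661 * X ^ 8 - 1022 * X ^ 7
    - 500 * X ^ 6 + 584 * X ^ 5 + 924 * X ^ 4 - 123 * X ^ 3 - 1152 * X ^ 2
    - 993 * X + 1

open Set

theorem existsUnique_root_of_neg_of_strictMonoOn {f : ℝ → ℝ} {c a b : ℝ}
    (hf : ContinuousOn f (Icc a b)) (hca : c < a) (hab : a ≤ b)
    (hneg : ∀ x ∈ Ioc c a, f x < 0) (hmono : StrictMonoOn f (Ici a)) (hb : 0 < f b) :
    (∃! x, c < x ∧ f x = 0) ∧ ∀ x, c < x → f x = 0 → a < x ∧ x < b := by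
  have hroot_bounds : ∀ x, c < x → f x = 0 → a < x ∧ x < b := by
    intro x hcx hx
    have hax : a < x := not_le.1 fun hxa => (hneg x ⟨hcx, hxa⟩).ne hx
    refine ⟨hax, not_le.1 fun hbx => ?_⟩
    have := hmono.monotoneOn (mem_Ici.2 hab) (mem_Ici.2 hax.le) hbx
    linarith
  obtain ⟨r, hr, hr0⟩ := intermediate_value_Ioo hab hf ⟨hneg a ⟨hca, le_rfl⟩, hb⟩
  refine ⟨⟨r, ⟨hca.trans hr.1, hr0⟩, fun y ⟨hcy, hy0⟩ => ?_⟩, hroot_bounds⟩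
  exact hmono.injOn (mem_Ici.2 (hroot_bounds y hcy hy0).1.le) (mem_Ici.2 hr.1.le) (hy0.trans hr0.symm)

lemma aeval_φ (x : ℝ) : aeval x φ = x^22 - 993*x^21 - 1152*x^20 - 123*x^19 + 924*x^18
    + 584*x^17 - 500*x^16 - 1022*x^15 - 661*x^14 + 105*x^13 + 476*x^12 + 878*x^11
    + 476*x^10 + 105*x^9 - 661*x^8 - 1022*x^7 - 500*x^6 + 584*x^5 + 924*x^4 - 123*x^3
    - 1152*x^2 - 993*x + 1 := by
  simp [φ, map_ofNat]

lemma aeval_derivative_φ (x : ℝ) : aeval x (derivative φ) = 22*x^21 - 20853*x^20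
    - 23040*x^19 - 2337*x^18 + 16632*x^17 + 9928*x^16 - 8000*x^15 - 15330*x^14 - 9254*x^13
    + 1365*x^12 + 5712*x^11 + 9658*x^10 + 4760*x^9 + 945*x^8 - 5288*x^7 - 7154*x^6
    - 3000*x^5 + 2920*x^4 + 3696*x^3 - 369*x^2 - 2304*x - 993 := by
  simp [φ, map_ofNat]
  ring

-- `x^17 ≤ x^18`, `x^9, …, x^12 ≤ x^13`, `x^4 ≤ x^5`, and `x^14 ≤ x^15, x^16`, `x^6 ≤ x^7, x^8`.
lemma aeval_φ_le {x : ℝ} (hx : 1 ≤ x) : aeval x φ ≤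
    x^18 * (x^4 - 993*x^3 - 1152*x^2 - 123*x + 1508) + x^13 * (2040 - 2183*x)
      + x^5 * (1508 - 2183*x) + (1 - 993*x - 1152*x^2 - 123*x^3) := by
  have p : ∀ k l : ℕ, k ≤ l → x^k ≤ x^l := fun k l h => pow_le_pow_right₀ hx h
  rw [aeval_φ]
  linarith [p 17 18 (by norm_num), p 14 16 (by norm_num), p 14 15 (by norm_num),
    p 12 13 (by norm_num), p 11 13 (by norm_num), p 10 13 (by norm_num),
    p 9 13 (by norm_num), p 6 8 (by norm_num), p 6 7 (by norm_num), p 4 5 (by norm_num)]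

lemma aeval_φ_neg {x : ℝ} (h1 : 1 < x) (h2 : x ≤ 994.158) : aeval x φ < 0 := by
  have h0 : 0 < x := by linarith
  have hquad : 0 < 1152 + 993*x - x^2 := by nlinarith
  have hquartic : x^4 - 993*x^3 - 1152*x^2 - 123*x + 1508 < 0 := by
    nlinarith [mul_nonneg (by nlinarith : (0:ℝ) ≤ x^2 - 1) hquad.le]
  have hcubic : 1 - 993*x - 1152*x^2 - 123*x^3 < 0 := by nlinarith [pow_pos h0 3, pow_pos h0 2]
  have := aeval_φ_le h1.le
  linarith [mul_neg_of_pos_of_neg (pow_pos h0 18) hquartic,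
    mul_neg_of_pos_of_neg (pow_pos h0 13) (by linarith : 2040 - 2183*x < 0),
    mul_neg_of_pos_of_neg (pow_pos h0 5) (by linarith : 1508 - 2183*x < 0)]

lemma aeval_derivative_φ_pos {x : ℝ} (hx : 994.158 ≤ x) : 0 < aeval x (derivative φ) := by
  have h1 : 1 ≤ x := by linarith
  have p : ∀ k, k ≤ 19 → x^k ≤ x^19 := fun k h => pow_le_pow_right₀ h1 h
  have hlead : 0 < x^19 * (22*x^2 - 20853*x - 77069) :=
    mul_pos (by positivity) (by nlinarith)
  rw [aeval_derivative_φ]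
  nlinarith [p 18 (by norm_num), p 15 (by norm_num), p 14 (by norm_num), p 13 (by norm_num),
    p 7 (by norm_num), p 6 (by norm_num), p 5 (by norm_num), p 2 (by norm_num),
    p 1 (by norm_num), p 0 (by norm_num), pow_nonneg (zero_le_one.trans h1) 17]

lemma strictMonoOn_aeval_φ : StrictMonoOn (fun x : ℝ => aeval x φ) (Ici 994.158) := by
  refine strictMonoOn_of_deriv_pos (convex_Ici _) φ.continuous_aeval.continuousOn fun x hx => ?_
  rw [interior_Ici] at hx
  rw [Polynomial.deriv_aeval]
  exact aeval_derivative_φ_pos hx.le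

/-- `φ` has exactly one real root `λ > 1`, and it satisfies
`994.158 < λ < 994.159`. -/
theorem φ_unique_root_gt_one :
    (∃! lam : ℝ, 1 < lam ∧ Polynomial.aeval lam φ = 0) ∧
    (∀ lam : ℝ, 1 < lam → Polynomial.aeval lam φ = 0 →
      (994.158 : ℝ) < lam ∧ lam < (994.159 : ℝ)) :=
  existsUnique_root_of_neg_of_strictMonoOn φ.continuous_aeval.continuousOn (by norm_num)
    (by norm_num) (fun _ hx => aeval_φ_neg hx.1 hx.2) strictMonoOn_aeval_φ
    (by rw [aeval_φ]; norm_num)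
end

section
/- Let L be an even hyperbolic lattice and let u, v ∈ L satisfy ⟨u,u⟩ > 0, ⟨v,v⟩ > 0 and ⟨u,v⟩ > 0 (so u and v lie in the same positive cone). Then for every negative integer d, the set {x ∈ L : ⟨x,u⟩ > 0, ⟨x,v⟩ < 0, and ⟨x,x⟩ = d} is finite. -/
open Matrix

/-- The intersection form of the lattice `ℤ^n` with Gram matrix `G`. -/
def latticePairing {n : ℕ} (G : Matrix (Fin n) (Fin n) ℤ) (x y : Fin n → ℤ) : ℤ :=
  x ⬝ᵥ G.mulVec y

/-- `G` is the Gram matrix of an even hyperbolic lattice: the rank is `> 1`, the form is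
symmetric, `⟨v,v⟩` is even for all `v`, and the real quadratic space has signature
`(1, n-1)`, expressed by a diagonalization over `ℝ` with diagonal `(1, -1, …, -1)`. -/
def IsEvenHyperbolic {n : ℕ} (G : Matrix (Fin n) (Fin n) ℤ) : Prop :=
  1 < n ∧ G.IsSymm ∧ (∀ v : Fin n → ℤ, Even (latticePairing G v v)) ∧
    ∃ P : Matrix (Fin n) (Fin n) ℝ, IsUnit P.det ∧
      Pᵀ * (G.map (Int.cast : ℤ → ℝ)) * P =
        Matrix.diagonal (fun i : Fin n => if (i : ℕ) = 0 then (1 : ℝ) else -1)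

/-!
Diagonalising the form over `ℝ` embeds `L` in Minkowski space `ℝ^{1,m}`, where `u` and `v` have
time components of the same sign. If `⟨x,u⟩ > 0 > ⟨x,v⟩`, then for one `w ∈ {u, v}` the time
components `t, t_w` of `x, w` satisfy `|t t_w| < |x_s ⬝ w_s|`, where `_s` denotes the space part.
Cauchy–Schwarz and `x_s ⬝ x_s = t² - d` give `t² (t_w² - w_s ⬝ w_s) ≤ -d (w_s ⬝ w_s)`, and
`t_w² > w_s ⬝ w_s` since `w` is timelike. This bounds `t`, hence every coordinate of `x`, so the
set consists of the lattice points of a bounded region.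
-/

open Bornology

lemma dotProduct_mulVec_eq_of_transpose_mul_mul_eq {ι K : Type*} [Fintype ι] [DecidableEq ι]
    [Field K] {A P D : Matrix ι ι K} (hP : IsUnit P.det) (h : Pᵀ * A * P = D) (x y : ι → K) :
    x ⬝ᵥ A *ᵥ y = (P⁻¹ *ᵥ x) ⬝ᵥ D *ᵥ (P⁻¹ *ᵥ y) := by
  have hA : A = P⁻¹ᵀ * D * P⁻¹ := by
    rw [← h, transpose_nonsing_inv, Matrix.mul_assoc, Matrix.mul_assoc, mul_nonsing_inv P hP,
      Matrix.mul_one, ← Matrix.mul_assoc, nonsing_inv_mul _ (isUnit_det_transpose P hP),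
      Matrix.one_mul]
  rw [hA, ← mulVec_mulVec, ← mulVec_mulVec, dotProduct_mulVec, vecMul_transpose]

lemma intCast_latticePairing {n : ℕ} (G : Matrix (Fin n) (Fin n) ℤ) (x y : Fin n → ℤ) :
    (latticePairing G x y : ℝ) =
      (fun i => (x i : ℝ)) ⬝ᵥ G.map (Int.cast : ℤ → ℝ) *ᵥ fun i => (y i : ℝ) := by
  simp [latticePairing, dotProduct, mulVec]

lemma sq_dotProduct_le {ι R : Type*} [Fintype ι] [CommRing R] [LinearOrder R]
    [IsStrictOrderedRing R] (x y : ι → R) :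
    (x ⬝ᵥ y) ^ 2 ≤ (x ⬝ᵥ x) * (y ⬝ᵥ y) := by
  simpa only [dotProduct, sq] using Finset.sum_mul_sq_le_sq_mul_sq Finset.univ x y

lemma dotProduct_self_nonneg {ι R : Type*} [Fintype ι] [CommRing R] [LinearOrder R]
    [IsStrictOrderedRing R] (x : ι → R) : 0 ≤ x ⬝ᵥ x :=
  Finset.sum_nonneg fun i _ => mul_self_nonneg (x i)

def minkowskiPairing {m : ℕ} (X Y : Fin (m + 1) → ℝ) : ℝ :=
  X 0 * Y 0 - Fin.tail X ⬝ᵥ Fin.tail Y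

lemma dotProduct_diagonal_mulVec_eq_minkowskiPairing {m : ℕ} (X Y : Fin (m + 1) → ℝ) :
    X ⬝ᵥ diagonal (fun i : Fin (m + 1) => if (i : ℕ) = 0 then (1 : ℝ) else -1) *ᵥ Y =
      minkowskiPairing X Y := by
  simp [minkowskiPairing, dotProduct, mulVec_diagonal, Fin.sum_univ_succ, Fin.tail,
    sub_eq_add_neg]

section minkowskiPairing

variable {m : ℕ} {U V X : Fin (m + 1) → ℝ}

lemma minkowskiPairing_neg_left : minkowskiPairing (-X) V = -minkowskiPairing X V := by
  simp only [minkowskiPairing, Fin.tail, dotProduct, Pi.neg_apply, neg_mul,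
    Finset.sum_neg_distrib]
  ring

lemma minkowskiPairing_neg_neg : minkowskiPairing (-X) (-X) = minkowskiPairing X X := by
  simp [minkowskiPairing, Fin.tail, dotProduct]

lemma mul_pos_of_minkowskiPairing_pos (hU : 0 < minkowskiPairing U U)
    (hV : 0 < minkowskiPairing V V) (hUV : 0 < minkowskiPairing U V) : 0 < U 0 * V 0 := by
  unfold minkowskiPairing at *
  by_contra! h
  nlinarith [sq_dotProduct_le (Fin.tail U) (Fin.tail V), dotProduct_self_nonneg (Fin.tail U),
    dotProduct_self_nonneg (Fin.tail V)]

lemma sq_mul_minkowskiPairing_self_le (hXV₀ : 0 ≤ X 0 * V 0) (hXV : minkowskiPairing X V < 0) :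
    X 0 ^ 2 * minkowskiPairing V V ≤ -minkowskiPairing X X * (Fin.tail V ⬝ᵥ Fin.tail V) := by
  unfold minkowskiPairing at *
  nlinarith [sq_dotProduct_le (Fin.tail X) (Fin.tail V)]

lemma sq_le_of_minkowskiPairing (hU : 0 < minkowskiPairing U U)
    (hV : 0 < minkowskiPairing V V) (hUV : 0 < minkowskiPairing U V)
    (hXU : 0 < minkowskiPairing X U) (hXV : minkowskiPairing X V < 0) :
    X 0 ^ 2 ≤ max (-minkowskiPairing X X * (Fin.tail U ⬝ᵥ Fin.tail U) / minkowskiPairing U U)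
      (-minkowskiPairing X X * (Fin.tail V ⬝ᵥ Fin.tail V) / minkowskiPairing V V) := by
  have hUV₀ := mul_pos_of_minkowskiPairing_pos hU hV hUV
  rcases le_or_gt 0 (X 0 * V 0) with hXV₀ | hXV₀
  · exact le_max_of_le_right ((le_div_iff₀ hV).2 (sq_mul_minkowskiPairing_self_le hXV₀ hXV))
  · have hXU₀ : 0 ≤ (-X) 0 * U 0 := by
      rw [Pi.neg_apply]; nlinarith [mul_neg_of_neg_of_pos hXV₀ hUV₀, sq_nonneg (V 0)]
    have := sq_mul_minkowskiPairing_self_le hXU₀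
      (by rwa [minkowskiPairing_neg_left, neg_neg_iff_pos])
    rw [minkowskiPairing_neg_neg, Pi.neg_apply, neg_sq] at this
    exact le_max_of_le_left ((le_div_iff₀ hU).2 this)

lemma sq_le_dotProduct_tail (X : Fin (m + 1) → ℝ) (j : Fin m) :
    X j.succ ^ 2 ≤ Fin.tail X ⬝ᵥ Fin.tail X := by
  rw [sq]
  exact Finset.single_le_sum (f := fun k => Fin.tail X k * Fin.tail X k)
    (fun k _ => mul_self_nonneg _) (Finset.mem_univ j)

lemma isBounded_setOf_minkowskiPairing (hU : 0 < minkowskiPairing U U)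
    (hV : 0 < minkowskiPairing V V) (hUV : 0 < minkowskiPairing U V) (d : ℝ) :
    IsBounded {X | 0 < minkowskiPairing X U ∧ minkowskiPairing X V < 0 ∧
      minkowskiPairing X X = d} := by
  set T := max (-d * (Fin.tail U ⬝ᵥ Fin.tail U) / minkowskiPairing U U)
    (-d * (Fin.tail V ⬝ᵥ Fin.tail V) / minkowskiPairing V V)
  have hsq : ∀ X : Fin (m + 1) → ℝ, 0 < minkowskiPairing X U → minkowskiPairing X V < 0 →
      minkowskiPairing X X = d → ∀ i, X i ^ 2 ≤ T + |d| := by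
    intro X hXU hXV hXX i
    have hX₀ : X 0 ^ 2 ≤ T := by
      simpa only [hXX] using sq_le_of_minkowskiPairing hU hV hUV hXU hXV
    cases i using Fin.cases with
    | zero => linarith [abs_nonneg d]
    | succ j =>
      have := sq_le_dotProduct_tail X j
      unfold minkowskiPairing at hXX
      nlinarith [neg_le_abs d]
  refine (Metric.isBounded_iff_subset_closedBall 0).2 ⟨√(T + |d|), fun X ⟨hXU, hXV, hXX⟩ => ?_⟩
  rw [mem_closedBall_zero_iff, pi_norm_le_iff_of_nonneg (Real.sqrt_nonneg _)]
  exact fun i => Real.abs_le_sqrt (hsq X hXU hXV hXX i)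

end minkowskiPairing

lemma isBounded_mulVec_image {ι : Type*} [Fintype ι] [DecidableEq ι] (P : Matrix ι ι ℝ)
    {S : Set (ι → ℝ)} (hS : IsBounded S) : IsBounded (P.mulVec '' S) :=
  (LinearMap.toContinuousLinearMap (Matrix.toLin' P)).lipschitz.isBounded_image hS

lemma finite_setOf_intCast_mem {ι : Type*} [Fintype ι] {K : Set (ι → ℝ)} (hK : IsBounded K) :
    {x : ι → ℤ | (fun i => (x i : ℝ)) ∈ K}.Finite := by
  have hb : IsBounded {x : ι → ℤ | (fun i => (x i : ℝ)) ∈ K} :=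
    (Isometry.postcomp_pi (α := ι) Real.isometry_intCast).antilipschitz.isBounded_preimage hK
  simpa using Metric.finite_isBounded_inter_isClosed DiscreteTopology.isDiscrete hb isClosed_univ

theorem finiteness_of_separating_vectors_general {n : ℕ} (G : Matrix (Fin n) (Fin n) ℤ)
    (hG : IsEvenHyperbolic G) (u v : Fin n → ℤ)
    (hu : 0 < latticePairing G u u) (hv : 0 < latticePairing G v v)
    (huv : 0 < latticePairing G u v) (d : ℤ) :
    {x : Fin n → ℤ | 0 < latticePairing G x u ∧ latticePairing G x v < 0 ∧
      latticePairing G x x = d}.Finite := by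
  obtain ⟨hn, -, -, P, hP, hdiag⟩ := hG
  obtain ⟨m, rfl⟩ : ∃ m, n = m + 1 := ⟨n - 1, by omega⟩
  let coords (x : Fin (m + 1) → ℤ) : Fin (m + 1) → ℝ := P⁻¹ *ᵥ fun i => (x i : ℝ)
  have hpair (x y : Fin (m + 1) → ℤ) :
      (latticePairing G x y : ℝ) = minkowskiPairing (coords x) (coords y) := by
    rw [intCast_latticePairing, dotProduct_mulVec_eq_of_transpose_mul_mul_eq hP hdiag,
      dotProduct_diagonal_mulVec_eq_minkowskiPairing]
  have hbdd := isBounded_setOf_minkowskiPairing (hpair u u ▸ Int.cast_pos.2 hu)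
    (hpair v v ▸ Int.cast_pos.2 hv) (hpair u v ▸ Int.cast_pos.2 huv) d
  refine (finite_setOf_intCast_mem (isBounded_mulVec_image P hbdd)).subset ?_
  rintro x ⟨hxu, hxv, hxx⟩
  refine ⟨coords x, ⟨hpair x u ▸ Int.cast_pos.2 hxu, hpair x v ▸ Int.cast_lt_zero.2 hxv,
    hpair x x ▸ congrArg Int.cast hxx⟩, ?_⟩
  simp [coords, mulVec_mulVec, mul_nonsing_inv P hP]

/-- In an even hyperbolic lattice, if `u, v` are vectors of positive square-norm lying
in the same positive cone (i.e. `⟨u,v⟩ > 0`), then for every negative integer `d` the set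
`{x ∈ L : ⟨x,u⟩ > 0, ⟨x,v⟩ < 0, ⟨x,x⟩ = d}` is finite. -/
theorem finiteness_of_separating_vectors {n : ℕ} (G : Matrix (Fin n) (Fin n) ℤ)
    (hG : IsEvenHyperbolic G) (u v : Fin n → ℤ)
    (hu : 0 < latticePairing G u u) (hv : 0 < latticePairing G v v)
    (huv : 0 < latticePairing G u v) (d : ℤ) (hd : d < 0) :
    {x : Fin n → ℤ | 0 < latticePairing G x u ∧ latticePairing G x v < 0 ∧
      latticePairing G x x = d}.Finite :=
  finiteness_of_separating_vectors_general G hG u v hu hv huv d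
end

section
/- Let L be an even hyperbolic lattice with positive cone P_L and let a = [h₀, ρ₁, …, ρ_K] be an ample list of vectors of L. Then for every v ∈ P_L ∩ L there exists an element g of the Weyl group W(L) (the subgroup of the isometry group of L generated by the reflections s_r : x ↦ x + ⟨x,r⟩·r in (−2)-vectors r) such that the image w = v^g satisfies ⟨w,w⟩ = ⟨v,v⟩, w ∈ P_L, S(h₀, w) = ∅, and ⟨w, r⟩ ≥ 0 for every r ∈ R⁺(a); that is, every Weyl group orbit of a vector of positive square-norm in P_L ∩ L contains a vector lying in the standard fundamental domain D(a). -/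
open Matrix

/-- A finite vector is lexicographically positive if it is nonzero and its leftmost
nonzero entry is positive. -/
def LexPos {m : ℕ} (t : Fin m → ℤ) : Prop :=
  ∃ j, 0 < t j ∧ ∀ i, i < j → t i = 0

/-- The vector `(⟨h₀,x⟩, ⟨ρ₁,x⟩, …, ⟨ρ_K,x⟩)` of pairings against the members of an
ample list. -/
def pairingVector {n K : ℕ} (G : Matrix (Fin n) (Fin n) ℤ) (h₀ : Fin n → ℤ)
    (ρ : Fin K → Fin n → ℤ) (x : Fin n → ℤ) : Fin (K + 1) → ℤ :=
  Fin.cons (latticePairing G h₀ x) (fun i => latticePairing G (ρ i) x)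

/-- The reflection `s_r : x ↦ x + ⟨x,r⟩ r` in a `(-2)`-vector `r`. -/
def reflect {n : ℕ} (G : Matrix (Fin n) (Fin n) ℤ) (x r : Fin n → ℤ) : Fin n → ℤ :=
  x + latticePairing G x r • r

/-!
Among the Weyl images `w` of `v` with `0 < ⟨w, h₀⟩ ≤ ⟨v, h₀⟩`, pick one whose pairing vector
`(⟨h₀, w⟩, ⟨ρ₁, w⟩, …, ⟨ρ_K, w⟩)` is lexicographically minimal. There are only finitely many
candidates: in a real frame where the form reads `x₀ y₀ - ∑ xᵢ yᵢ`, the coordinate `|w₀|`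
dominates all others and is at most `2 ⟨w, h₀⟩ |(h₀)₀| / ⟨h₀, h₀⟩`. If `⟨w, r⟩ < 0` for a
`(-2)`-vector `r` with lexicographically positive pairing vector, then `s_r w = w + ⟨w, r⟩ r` is
again a candidate (reflections preserve the positive cone by the reverse Cauchy–Schwarz
inequality, and `⟨r, h₀⟩ ≥ 0`) with a strictly smaller pairing vector. So `⟨w, r⟩ ≥ 0` for all
such `r`, which covers both `S(h₀, w) = ∅` and `R⁺(a)`.
-/

def lorentzForm {m : ℕ} (a b : Fin (m + 1) → ℝ) : ℝ :=
  a 0 * b 0 - ∑ i : Fin m, a i.succ * b i.succ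

namespace lorentzForm

variable {m : ℕ}

theorem sum_sq_lt (a : Fin (m + 1) → ℝ) (ha : 0 < lorentzForm a a) :
    ∑ i : Fin m, a i.succ ^ 2 < a 0 ^ 2 := by
  simp only [lorentzForm, ← sq] at ha
  linarith

theorem pos_iff {a b : Fin (m + 1) → ℝ} (ha : 0 < lorentzForm a a) (hb : 0 < lorentzForm b b) :
    0 < lorentzForm a b ↔ 0 < a 0 * b 0 := by
  have hcs := Finset.sum_mul_sq_le_sq_mul_sq Finset.univ (fun i : Fin m => a i.succ)
    (fun i => b i.succ)
  have hA := sum_sq_lt a ha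
  have hB := sum_sq_lt b hb
  have hA0 : 0 ≤ ∑ i : Fin m, a i.succ ^ 2 := by positivity
  have hB0 : 0 ≤ ∑ i : Fin m, b i.succ ^ 2 := by positivity
  have hs : (∑ i : Fin m, a i.succ * b i.succ) ^ 2 < (a 0 * b 0) ^ 2 := by
    rw [mul_pow]
    calc _ ≤ _ := hcs
      _ < _ := mul_lt_mul'' hA hB hA0 hB0
  have hneg := neg_abs_le (∑ i : Fin m, a i.succ * b i.succ)
  have hle := le_abs_self (∑ i : Fin m, a i.succ * b i.succ)
  have habs := sq_lt_sq.mp hs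
  unfold lorentzForm
  cases abs_cases (a 0 * b 0) <;> constructor <;> intro <;> linarith

theorem pos_trans {a b c : Fin (m + 1) → ℝ} (ha : 0 < lorentzForm a a) (hb : 0 < lorentzForm b b)
    (hc : 0 < lorentzForm c c) (hab : 0 < lorentzForm a b) (hbc : 0 < lorentzForm b c) :
    0 < lorentzForm a c := by
  rw [pos_iff ha hb] at hab
  rw [pos_iff hb hc] at hbc
  rw [pos_iff ha hc]
  exact pos_of_mul_pos_left (by nlinarith [mul_pos hab hbc]) (sq_nonneg (b 0))

theorem abs_le_abs_zero {y : Fin (m + 1) → ℝ} (hy : 0 < lorentzForm y y) (i : Fin (m + 1)) :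
    |y i| ≤ |y 0| := by
  refine sq_le_sq.mp ?_
  cases i using Fin.cases with
  | zero => exact le_rfl
  | succ j =>
    calc y j.succ ^ 2 ≤ ∑ i : Fin m, y i.succ ^ 2 :=
          Finset.single_le_sum (fun i _ => sq_nonneg (y i.succ)) (Finset.mem_univ j)
      _ ≤ y 0 ^ 2 := (sum_sq_lt y hy).le

theorem mul_abs_zero_le {y h : Fin (m + 1) → ℝ} (hh : 0 < lorentzForm h h)
    (hy : 0 < lorentzForm y y) (hyh : 0 < lorentzForm y h) :
    lorentzForm h h * |y 0| ≤ 2 * lorentzForm y h * |h 0| := by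
  have hp : 0 < y 0 * h 0 := (pos_iff hy hh).mp hyh
  have hcs := Finset.sum_mul_sq_le_sq_mul_sq Finset.univ (fun i : Fin m => y i.succ)
    (fun i => h i.succ)
  have hA := sum_sq_lt y hy
  have hH0 : 0 ≤ ∑ i : Fin m, h i.succ ^ 2 := by positivity
  have he : lorentzForm h h = h 0 ^ 2 - ∑ i : Fin m, h i.succ ^ 2 := by
    simp only [lorentzForm, sq]
  have hd : lorentzForm y h = y 0 * h 0 - ∑ i : Fin m, y i.succ * h i.succ := rfl
  -- `e y₀² ≤ p² - s² ≤ 2 p (p - s)` for `e = ⟨h, h⟩`, `p = y₀ h₀` and `s` the spatial part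
  -- of `⟨y, h⟩`, by Cauchy–Schwarz
  have key : lorentzForm h h * |y 0| * |y 0| ≤ 2 * lorentzForm y h * |h 0| * |y 0| := by
    rw [mul_assoc, abs_mul_abs_self, mul_assoc, ← abs_mul, abs_of_pos (by rwa [mul_comm]), he, hd]
    nlinarith [sq_nonneg (y 0 * h 0 - ∑ i : Fin m, y i.succ * h i.succ),
      mul_le_mul_of_nonneg_right hA.le hH0]
  exact le_of_mul_le_mul_right key (abs_pos.mpr (left_ne_zero_of_mul hp.ne'))

end lorentzForm

section Lattice

variable {n : ℕ} {G : Matrix (Fin n) (Fin n) ℤ}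

theorem latticePairing_comm (hG : G.IsSymm) (x y : Fin n → ℤ) :
    latticePairing G x y = latticePairing G y x := by
  rw [latticePairing, latticePairing, dotProduct_mulVec, dotProduct_comm, ← vecMul_transpose, hG]

theorem latticePairing_reflect_left (x r y : Fin n → ℤ) :
    latticePairing G (reflect G x r) y =
      latticePairing G x y + latticePairing G x r * latticePairing G r y := by
  simp only [reflect, latticePairing, add_dotProduct, smul_dotProduct, smul_eq_mul]

theorem latticePairing_reflect_right (x y r : Fin n → ℤ) :
    latticePairing G x (reflect G y r) =
      latticePairing G x y + latticePairing G y r * latticePairing G x r := by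
  simp only [reflect, latticePairing, mulVec_add, mulVec_smul, dotProduct_add, dotProduct_smul,
    smul_eq_mul]

theorem latticePairing_reflect_reflect (hG : G.IsSymm) {r : Fin n → ℤ}
    (hr : latticePairing G r r = -2) (x : Fin n → ℤ) :
    latticePairing G (reflect G x r) (reflect G x r) = latticePairing G x x := by
  rw [latticePairing_reflect_left, latticePairing_reflect_right, latticePairing_reflect_right, hr,
    latticePairing_comm hG r x]
  ring

end Lattice

section WeylOrbit

variable {n : ℕ} (G : Matrix (Fin n) (Fin n) ℤ)

def weylOrbit (v : Fin n → ℤ) : Set (Fin n → ℤ) :=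
  {w | ∃ rs : List (Fin n → ℤ), (∀ r ∈ rs, latticePairing G r r = -2) ∧
    w = rs.foldl (reflect G) v}

variable {G}

theorem mem_weylOrbit_self (v : Fin n → ℤ) : v ∈ weylOrbit G v :=
  ⟨[], by simp, rfl⟩

theorem reflect_mem_weylOrbit {v w r : Fin n → ℤ} (hw : w ∈ weylOrbit G v)
    (hr : latticePairing G r r = -2) : reflect G w r ∈ weylOrbit G v := by
  obtain ⟨rs, hrs, rfl⟩ := hw
  refine ⟨rs ++ [r], fun r' hr' => ?_, by simp⟩
  rcases List.mem_append.mp hr' with h | h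
  · exact hrs r' h
  · rwa [List.mem_singleton.mp h]

end WeylOrbit

open scoped Matrix.Norms.Operator in
theorem finite_setOf_abs_inv_mulVec_le {ι : Type*} [Fintype ι] [DecidableEq ι]
    {P : Matrix ι ι ℝ} (hdet : IsUnit P.det) (R : ℝ) :
    {u : ι → ℤ | ∀ i, |(P⁻¹ *ᵥ fun j => (u j : ℝ)) i| ≤ R}.Finite := by
  refine (Set.finite_Icc (fun _ => -⌈‖P‖ * R⌉) (fun _ => ⌈‖P‖ * R⌉)).subset fun u hu => ?_
  have hbound : ∀ i, |u i| ≤ ⌈‖P‖ * R⌉ := by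
    intro i
    have hR : 0 ≤ R := (abs_nonneg _).trans (hu i)
    have hcoord : |(u i : ℝ)| ≤ ‖P‖ * R :=
      calc |(u i : ℝ)| ≤ ‖fun j => (u j : ℝ)‖ := norm_le_pi_norm (fun j => (u j : ℝ)) i
        _ = ‖P *ᵥ (P⁻¹ *ᵥ fun j => (u j : ℝ))‖ := by
          rw [mulVec_mulVec, mul_nonsing_inv P hdet, one_mulVec]
        _ ≤ ‖P‖ * ‖P⁻¹ *ᵥ fun j => (u j : ℝ)‖ := linfty_opNorm_mulVec _ _
        _ ≤ ‖P‖ * R := by gcongr; exact (pi_norm_le_iff_of_nonneg hR).mpr hu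
    exact_mod_cast hcoord.trans (Int.le_ceil _)
  exact ⟨fun i => (abs_le.mp (hbound i)).1, fun i => (abs_le.mp (hbound i)).2⟩

section Hyperbolic

variable {m : ℕ} {G : Matrix (Fin (m + 1)) (Fin (m + 1)) ℤ}
  {P : Matrix (Fin (m + 1)) (Fin (m + 1)) ℝ}

noncomputable def lorentzCoords (P : Matrix (Fin (m + 1)) (Fin (m + 1)) ℝ)
    (x : Fin (m + 1) → ℤ) : Fin (m + 1) → ℝ :=
  P⁻¹ *ᵥ fun i => (x i : ℝ)

def IsLorentzFrame (G : Matrix (Fin (m + 1)) (Fin (m + 1)) ℤ)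
    (P : Matrix (Fin (m + 1)) (Fin (m + 1)) ℝ) : Prop :=
  IsUnit P.det ∧ Pᵀ * G.map (Int.cast : ℤ → ℝ) * P =
    diagonal (fun i : Fin (m + 1) => if (i : ℕ) = 0 then (1 : ℝ) else -1)

theorem latticePairing_cast_eq_lorentzForm (hP : IsLorentzFrame G P)
    (x y : Fin (m + 1) → ℤ) :
    (latticePairing G x y : ℝ) = lorentzForm (lorentzCoords P x) (lorentzCoords P y) := by
  have hG : G.map (Int.cast : ℤ → ℝ) = P⁻¹ᵀ * (Pᵀ * G.map (Int.cast : ℤ → ℝ) * P) * P⁻¹ := by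
    calc G.map (Int.cast : ℤ → ℝ)
        = (P * P⁻¹)ᵀ * G.map (Int.cast : ℤ → ℝ) * (P * P⁻¹) := by
          rw [mul_nonsing_inv P hP.1, transpose_one, Matrix.one_mul, Matrix.mul_one]
      _ = _ := by simp only [transpose_mul, Matrix.mul_assoc]
  have hcast : (latticePairing G x y : ℝ) =
      (fun i => (x i : ℝ)) ⬝ᵥ G.map (Int.cast : ℤ → ℝ) *ᵥ fun i => (y i : ℝ) := by
    simp [latticePairing, dotProduct, mulVec]
  rw [hcast, hG, hP.2, ← mulVec_mulVec, ← mulVec_mulVec, dotProduct_mulVec, vecMul_transpose]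
  simp [lorentzForm, lorentzCoords, dotProduct, mulVec_diagonal, Fin.sum_univ_succ]
  ring

theorem lorentzForm_lorentzCoords_pos_iff (hP : IsLorentzFrame G P)
    {x y : Fin (m + 1) → ℤ} :
    0 < lorentzForm (lorentzCoords P x) (lorentzCoords P y) ↔ 0 < latticePairing G x y := by
  rw [← latticePairing_cast_eq_lorentzForm hP, Int.cast_pos]

theorem latticePairing_pos_trans (hP : IsLorentzFrame G P) {x y z : Fin (m + 1) → ℤ}
    (hx : 0 < latticePairing G x x) (hy : 0 < latticePairing G y y)
    (hz : 0 < latticePairing G z z) (hxy : 0 < latticePairing G x y)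
    (hyz : 0 < latticePairing G y z) : 0 < latticePairing G x z := by
  simp only [← lorentzForm_lorentzCoords_pos_iff hP] at *
  exact lorentzForm.pos_trans hx hy hz hxy hyz

theorem latticePairing_reflect_pos (hG : G.IsSymm) (hP : IsLorentzFrame G P)
    {h w r : Fin (m + 1) → ℤ} (hh : 0 < latticePairing G h h) (hw : 0 < latticePairing G w w)
    (hwh : 0 < latticePairing G w h) (hr : latticePairing G r r = -2) :
    0 < latticePairing G (reflect G w r) h := by
  have hww' : 0 < latticePairing G w (reflect G w r) := by
    rw [latticePairing_reflect_right]
    exact add_pos_of_pos_of_nonneg hw (mul_self_nonneg _)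
  rw [latticePairing_comm hG] at hwh ⊢
  exact latticePairing_pos_trans hP hh hw (by rwa [latticePairing_reflect_reflect hG hr]) hwh hww'

theorem finite_setOf_latticePairing_le (hP : IsLorentzFrame G P) {h : Fin (m + 1) → ℤ}
    (hh : 0 < latticePairing G h h) (d : ℤ) :
    {u | 0 < latticePairing G u u ∧ 0 < latticePairing G u h ∧
      latticePairing G u h ≤ d}.Finite := by
  rw [← lorentzForm_lorentzCoords_pos_iff hP] at hh
  refine (finite_setOf_abs_inv_mulVec_le hP.1
    (2 * d * |lorentzCoords P h 0| /
      lorentzForm (lorentzCoords P h) (lorentzCoords P h))).subset ?_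
  rintro u ⟨huu, huh, hud⟩ i
  rw [← lorentzForm_lorentzCoords_pos_iff hP] at huu huh
  have hud' : lorentzForm (lorentzCoords P u) (lorentzCoords P h) ≤ d := by
    rw [← latticePairing_cast_eq_lorentzForm hP]; exact_mod_cast hud
  rw [le_div_iff₀ hh, mul_comm]
  calc _ ≤ lorentzForm (lorentzCoords P h) (lorentzCoords P h) * |lorentzCoords P u 0| :=
        mul_le_mul_of_nonneg_left (lorentzForm.abs_le_abs_zero huu i) hh.le
    _ ≤ 2 * lorentzForm (lorentzCoords P u) (lorentzCoords P h) * |lorentzCoords P h 0| :=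
        lorentzForm.mul_abs_zero_le hh huu huh
    _ ≤ 2 * d * |lorentzCoords P h 0| := by gcongr

def weylCandidates (G : Matrix (Fin (m + 1)) (Fin (m + 1)) ℤ) (h v : Fin (m + 1) → ℤ) :
    Set (Fin (m + 1) → ℤ) :=
  weylOrbit G v ∩ {u | latticePairing G u u = latticePairing G v v ∧
    0 < latticePairing G u h ∧ latticePairing G u h ≤ latticePairing G v h}

theorem finite_weylCandidates (hP : IsLorentzFrame G P) {h : Fin (m + 1) → ℤ}
    (hh : 0 < latticePairing G h h) {v : Fin (m + 1) → ℤ} (hv : 0 < latticePairing G v v) :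
    (weylCandidates G h v).Finite :=
  (finite_setOf_latticePairing_le hP hh _).subset fun _ ⟨_, huu, hu⟩ => ⟨huu ▸ hv, hu⟩

theorem reflect_mem_weylCandidates (hG : G.IsSymm) (hP : IsLorentzFrame G P)
    {h v w r : Fin (m + 1) → ℤ} (hh : 0 < latticePairing G h h)
    (hv : 0 < latticePairing G v v) (hw : w ∈ weylCandidates G h v)
    (hr : latticePairing G r r = -2) (hrh : 0 ≤ latticePairing G r h)
    (hwr : latticePairing G w r ≤ 0) : reflect G w r ∈ weylCandidates G h v := by
  obtain ⟨hwW, hww, hwh, hwv⟩ := hw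
  refine ⟨reflect_mem_weylOrbit hwW hr, by rw [latticePairing_reflect_reflect hG hr, hww],
    latticePairing_reflect_pos hG hP hh (hww ▸ hv) hwh hr, ?_⟩
  rw [latticePairing_reflect_left]
  linarith [mul_nonpos_of_nonpos_of_nonneg hwr hrh]

end Hyperbolic

theorem LexPos.zero_nonneg {k : ℕ} {s : Fin (k + 1) → ℤ} (hs : LexPos s) : 0 ≤ s 0 := by
  obtain ⟨j, hj, hbefore⟩ := hs
  rcases Fin.eq_zero_or_eq_succ j with rfl | ⟨j', rfl⟩
  · exact hj.le
  · exact (hbefore 0 (Fin.succ_pos j')).ge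

theorem lexPos_of_zero_pos {k : ℕ} {s : Fin (k + 1) → ℤ} (hs : 0 < s 0) : LexPos s :=
  ⟨0, hs, fun i hi => absurd hi (Fin.not_lt_zero i)⟩

theorem toLex_add_smul_lt {k : ℕ} {s : Fin k → ℤ} (hs : LexPos s) {c : ℤ} (hc : c < 0)
    (t : Fin k → ℤ) : toLex (t + c • s) < toLex t := by
  obtain ⟨j, hj, hbefore⟩ := hs
  exact ⟨j, fun i hi => by simp [hbefore i hi], by simpa using mul_neg_of_neg_of_pos hc hj⟩

@[simp]
theorem pairingVector_zero {n K : ℕ} (G : Matrix (Fin n) (Fin n) ℤ) (h₀ : Fin n → ℤ)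
    (ρ : Fin K → Fin n → ℤ) (x : Fin n → ℤ) :
    pairingVector G h₀ ρ x 0 = latticePairing G h₀ x :=
  rfl

theorem pairingVector_reflect {n K : ℕ} (G : Matrix (Fin n) (Fin n) ℤ) (h₀ : Fin n → ℤ)
    (ρ : Fin K → Fin n → ℤ) (w r : Fin n → ℤ) :
    pairingVector G h₀ ρ (reflect G w r) =
      pairingVector G h₀ ρ w + latticePairing G w r • pairingVector G h₀ ρ r := by
  ext j
  cases j using Fin.cases <;>
    simp [pairingVector, latticePairing_reflect_right, mul_comm]

theorem exists_weyl_image_in_fundamental_domain_general {n K : ℕ}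
    (G : Matrix (Fin n) (Fin n) ℤ) (hG : IsEvenHyperbolic G)
    (h₀ : Fin n → ℤ) (ρ : Fin K → Fin n → ℤ)
    (hh₀ : 0 < latticePairing G h₀ h₀)
    (v : Fin n → ℤ) (hv : 0 < latticePairing G v v)
    (hvcone : 0 < latticePairing G v h₀) :
    ∃ rs : List (Fin n → ℤ), (∀ r ∈ rs, latticePairing G r r = -2) ∧
      ∃ w : Fin n → ℤ, w = rs.foldl (reflect G) v ∧
        latticePairing G w w = latticePairing G v v ∧
        0 < latticePairing G w w ∧ 0 < latticePairing G w h₀ ∧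
        (¬ ∃ r : Fin n → ℤ, 0 < latticePairing G r h₀ ∧ latticePairing G r w < 0 ∧
          latticePairing G r r = -2) ∧
        ∀ r : Fin n → ℤ, latticePairing G r r = -2 → latticePairing G r h₀ = 0 →
          LexPos (pairingVector G h₀ ρ r) → 0 ≤ latticePairing G w r := by
  obtain ⟨hn, hsymm, -, P, hP⟩ := hG
  obtain ⟨m, rfl⟩ : ∃ m, n = m + 1 := ⟨n - 1, by omega⟩
  obtain ⟨w, hw, hmin⟩ := (weylCandidates G h₀ v).exists_min_image
    (fun u => toLex (pairingVector G h₀ ρ u)) (finite_weylCandidates hP hh₀ hv)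
    ⟨v, mem_weylOrbit_self v, rfl, hvcone, le_rfl⟩
  have hdom : ∀ r, latticePairing G r r = -2 → LexPos (pairingVector G h₀ ρ r) →
      0 ≤ latticePairing G w r := by
    intro r hr hlex
    by_contra! hwr
    have hrh : 0 ≤ latticePairing G r h₀ := by
      simpa [latticePairing_comm hsymm h₀] using hlex.zero_nonneg
    refine (toLex_add_smul_lt hlex hwr (pairingVector G h₀ ρ w)).not_ge ?_
    rw [← pairingVector_reflect]
    exact hmin _ (reflect_mem_weylCandidates hsymm hP hh₀ hv hw hr hrh hwr.le)
  obtain ⟨⟨rs, hrs, rfl⟩, hww, hwh, -⟩ := hw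
  refine ⟨rs, hrs, _, rfl, hww, hww ▸ hv, hwh, ?_, fun r hr _ hlex => hdom r hr hlex⟩
  rintro ⟨r, hrh, hrw, hr⟩
  refine (hdom r hr (lexPos_of_zero_pos ?_)).not_gt (by rwa [latticePairing_comm hsymm])
  rwa [pairingVector_zero, latticePairing_comm hsymm]

/-- Every vector `v` of positive square-norm in `P_L ∩ L` can be moved into the standard
fundamental domain `D(a)` of the Weyl group `W(L)` determined by an ample list
`a = [h₀, ρ₁, …, ρ_K]` by applying an element of `W(L)`, i.e. a product of reflections
in `(-2)`-vectors: the resulting `w` has the same square-norm, lies in the positive cone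
of `h₀`, satisfies `S(h₀,w) = ∅`, and pairs nonnegatively with every `r ∈ R⁺(a)`. -/
theorem exists_weyl_image_in_fundamental_domain {n K : ℕ}
    (G : Matrix (Fin n) (Fin n) ℤ) (hG : IsEvenHyperbolic G)
    (h₀ : Fin n → ℤ) (ρ : Fin K → Fin n → ℤ)
    (hh₀ : 0 < latticePairing G h₀ h₀)
    (hample : ∀ r : Fin n → ℤ, latticePairing G r r = -2 →
      latticePairing G r h₀ = 0 → ∃ i, latticePairing G (ρ i) r ≠ 0)
    (v : Fin n → ℤ) (hv : 0 < latticePairing G v v)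
    (hvcone : 0 < latticePairing G v h₀) :
    ∃ rs : List (Fin n → ℤ), (∀ r ∈ rs, latticePairing G r r = -2) ∧
      ∃ w : Fin n → ℤ, w = rs.foldl (reflect G) v ∧
        latticePairing G w w = latticePairing G v v ∧
        0 < latticePairing G w w ∧ 0 < latticePairing G w h₀ ∧
        (¬ ∃ r : Fin n → ℤ, 0 < latticePairing G r h₀ ∧ latticePairing G r w < 0 ∧
          latticePairing G r r = -2) ∧
        ∀ r : Fin n → ℤ, latticePairing G r r = -2 → latticePairing G r h₀ = 0 →
          LexPos (pairingVector G h₀ ρ r) → 0 ≤ latticePairing G w r :=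
  exists_weyl_image_in_fundamental_domain_general G hG h₀ ρ hh₀ v hv hvcone
end

section
/- Let p be an odd prime, let q be a prime with q ≡ 3 (mod 8) such that −q is a quadratic nonresidue modulo p, and let γ be an integer with γ² + p ≡ 0 (mod q). Then the 4×4 integer matrix −[[2, 1, 0, 0], [1, (q+1)/2, 0, γ], [0, 0, p(q+1)/2, p], [0, γ, p, 2(p+γ²)/q]] is the Gram matrix of an even negative definite lattice H^{(−p)} of rank 4 whose discriminant group H^{(−p)∨}/H^{(−p)} is isomorphic to (ℤ/pℤ)². -/
set_option maxHeartbeats 1000000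

open Matrix

/-- Auxiliary: positive definiteness of the matrix with cleared denominators. -/
lemma hgram_aux_posDef (p q : ℕ) (hp : 0 < p) (hqp : 0 < q) (c d γ : ℤ)
    (hc : (q : ℤ) + 1 = 2 * c) (hd : γ ^ 2 + (p : ℤ) = q * d) :
    (Matrix.map (!![2, 1, 0, 0; 1, c, 0, γ; 0, 0, (p:ℤ)*c, (p:ℤ); 0, γ, (p:ℤ), 2*d])
      (Int.cast : ℤ → ℝ)).PosDef := by
  rw [Matrix.posDef_iff_dotProduct_mulVec]
  have hpR : (0:ℝ) < p := by exact_mod_cast hp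
  have hqR : (0:ℝ) < q := by exact_mod_cast hqp
  have hq1R : (0:ℝ) < (q:ℝ) + 1 := by linarith
  have hcR : (q : ℝ) + 1 = 2 * (c:ℝ) := by exact_mod_cast hc
  have hdR : (γ:ℝ) ^ 2 + (p : ℝ) = q * d := by exact_mod_cast hd
  constructor
  · ext i j
    fin_cases i <;> fin_cases j <;>
      simp [Matrix.conjTranspose_apply, Matrix.map_apply, Matrix.vecHead, Matrix.vecTail]
  · intro x hx
    have key : 2 * (q:ℝ) * ((q:ℝ)+1) *
        (star x ⬝ᵥ (Matrix.map (!![2, 1, 0, 0; 1, c, 0, γ; 0, 0, (p:ℤ)*c, (p:ℤ);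
          0, γ, (p:ℤ), 2*d]) (Int.cast : ℤ → ℝ)) *ᵥ x)
        = (q:ℝ)*((q:ℝ)+1)*(2*x 0 + x 1)^2 + ((q:ℝ)+1)*((q:ℝ)*x 1 + 2*(γ:ℝ)*x 3)^2
          + (p:ℝ)*(q:ℝ)*(((q:ℝ)+1)*x 2 + 2*x 3)^2 + 4*(p:ℝ)*(x 3)^2 := by
      simp [Matrix.mulVec, dotProduct, Fin.sum_univ_four, Matrix.vecHead,
        Matrix.vecTail]
      linear_combination (-(q:ℝ)*((q:ℝ)+1)*((x 1)^2 + (p:ℝ)*(x 2)^2)) * hcR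
        + (-4*((q:ℝ)+1)*(x 3)^2) * hdR
    by_contra hQ
    push_neg at hQ
    have hS : (q:ℝ)*((q:ℝ)+1)*(2*x 0 + x 1)^2 + ((q:ℝ)+1)*((q:ℝ)*x 1 + 2*(γ:ℝ)*x 3)^2
          + (p:ℝ)*(q:ℝ)*(((q:ℝ)+1)*x 2 + 2*x 3)^2 + 4*(p:ℝ)*(x 3)^2 ≤ 0 := by
      rw [← key]
      exact mul_nonpos_of_nonneg_of_nonpos (by positivity) hQ
    have t1 : (0:ℝ) ≤ (q:ℝ)*((q:ℝ)+1)*(2*x 0 + x 1)^2 := by positivity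
    have t2 : (0:ℝ) ≤ ((q:ℝ)+1)*((q:ℝ)*x 1 + 2*(γ:ℝ)*x 3)^2 := by positivity
    have t3 : (0:ℝ) ≤ (p:ℝ)*(q:ℝ)*(((q:ℝ)+1)*x 2 + 2*x 3)^2 := by positivity
    have t4 : (0:ℝ) ≤ 4*(p:ℝ)*(x 3)^2 := by positivity
    have h3 : x 3 = 0 := by
      by_contra h
      have hsq : 0 < (x 3)^2 := pow_two_pos_of_ne_zero h
      nlinarith [mul_pos hpR hsq]
    have h2 : x 2 = 0 := by
      by_contra h
      have hne : ((q:ℝ)+1)*x 2 + 2*x 3 ≠ 0 := by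
        rw [h3]; simpa using mul_ne_zero hq1R.ne' h
      have hsq : 0 < (((q:ℝ)+1)*x 2 + 2*x 3)^2 := pow_two_pos_of_ne_zero hne
      nlinarith [mul_pos (mul_pos hpR hqR) hsq]
    have h1 : x 1 = 0 := by
      by_contra h
      have hne : (q:ℝ)*x 1 + 2*(γ:ℝ)*x 3 ≠ 0 := by
        rw [h3]; simpa using mul_ne_zero hqR.ne' h
      have hsq : 0 < ((q:ℝ)*x 1 + 2*(γ:ℝ)*x 3)^2 := pow_two_pos_of_ne_zero hne
      nlinarith [mul_pos hq1R hsq]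
    have h0 : x 0 = 0 := by
      by_contra h
      have hne : 2*x 0 + x 1 ≠ 0 := by
        rw [h1]; simpa using h
      have hsq : 0 < (2*x 0 + x 1)^2 := pow_two_pos_of_ne_zero hne
      nlinarith [mul_pos (mul_pos hqR hq1R) hsq]
    exact hx (funext fun i => by fin_cases i <;> assumption)

/-- The Gram matrix of the Rudakov–Shafarevich lattice `H^{(-p)}` built from an odd
prime `p`, an auxiliary prime `q` and an integer `γ`. -/
def HGram (p q : ℕ) (γ : ℤ) : Matrix (Fin 4) (Fin 4) ℤ :=
  -!![2, 1, 0, 0;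
      1, ((q : ℤ) + 1) / 2, 0, γ;
      0, 0, (p : ℤ) * ((q : ℤ) + 1) / 2, (p : ℤ);
      0, γ, (p : ℤ), 2 * ((p : ℤ) + γ ^ 2) / (q : ℤ)]

/-- For an odd prime `p`, a prime `q ≡ 3 (mod 8)` such that `-q` is a quadratic
nonresidue mod `p`, and an integer `γ` with `γ² + p ≡ 0 (mod q)`, the matrix `HGram`
is the Gram matrix of an even negative definite lattice of rank `4` whose
discriminant group is isomorphic to `(ℤ/pℤ)²`. -/
theorem HGram_even_negDef_discriminant (p q : ℕ) (hp : p.Prime) (hpodd : Odd p)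
    (hq : q.Prime) (hq8 : q % 8 = 3) (hnr : ¬ IsSquare (-(q : ZMod p)))
    (γ : ℤ) (hγ : (q : ℤ) ∣ γ ^ 2 + (p : ℤ)) :
    (∀ v : Fin 4 → ℤ, Even (v ⬝ᵥ (HGram p q γ).mulVec v)) ∧
    ((-(HGram p q γ)).map (Int.cast : ℤ → ℝ)).PosDef ∧
    Nonempty (((Fin 4 → ℤ) ⧸ LinearMap.range (Matrix.toLin' (HGram p q γ))) ≃+
      (ZMod p × ZMod p)) := by
  haveI : Fact p.Prime := ⟨hp⟩
  have hq0 : (q : ℤ) ≠ 0 := by have := hq.pos; positivity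
  obtain ⟨d, hd⟩ : ∃ d : ℤ, γ ^ 2 + (p : ℤ) = q * d := hγ
  have hq8' : (q : ℤ) % 8 = 3 := by omega
  obtain ⟨c, hc⟩ : ∃ c : ℤ, (q : ℤ) + 1 = 2 * c := ⟨((q:ℤ)+1)/2, by omega⟩
  obtain ⟨e, he⟩ : ∃ e : ℤ, c = 2 * e := ⟨c/2, by omega⟩
  have hdiv1 : ((q : ℤ) + 1) / 2 = c := by omega
  have hdiv2 : (p : ℤ) * ((q : ℤ) + 1) / 2 = p * c := by
    rw [hc, show (p:ℤ) * (2*c) = 2*(p*c) by ring, Int.mul_ediv_cancel_left _ two_ne_zero]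
  have hdiv3 : 2 * ((p : ℤ) + γ ^ 2) / (q : ℤ) = 2 * d := by
    rw [show 2 * ((p:ℤ) + γ^2) = q * (2*d) by linear_combination 2*hd,
      Int.mul_ediv_cancel_left _ hq0]
  have hM : HGram p q γ =
      -!![2, 1, 0, 0; 1, c, 0, γ; 0, 0, (p:ℤ)*c, (p:ℤ); 0, γ, (p:ℤ), 2*d] := by
    rw [HGram, hdiv1, hdiv2, hdiv3]
  have hpq : p ≠ q := by
    rintro rfl
    exact hnr (by simp [ZMod.natCast_self])
  have hpq' : ¬ (p ∣ q) := fun h => hpq ((Nat.prime_dvd_prime_iff_eq hp hq).mp h)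
  have hcop : IsCoprime (q : ℤ) (p : ℤ) := by
    rw [Int.isCoprime_iff_gcd_eq_one]
    simpa using (Nat.coprime_primes hq hp).mpr (Ne.symm hpq)
  refine ⟨?_, ?_, ?_⟩
  · -- evenness
    intro v
    have hv : v ⬝ᵥ (HGram p q γ).mulVec v =
        2 * (-(v 0^2 + v 0 * v 1 + e * (v 1)^2 + γ * v 1 * v 3 + (p:ℤ) * e * (v 2)^2
          + (p:ℤ) * v 2 * v 3 + d * (v 3)^2)) := by
      rw [hM, he]
      simp [Matrix.mulVec, dotProduct, Fin.sum_univ_four, Matrix.vecHead,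
        Matrix.vecTail]
      ring
    rw [hv]
    exact even_two_mul _
  · -- positive definiteness of the negated Gram matrix
    rw [hM, neg_neg]
    exact hgram_aux_posDef p q hp.pos hq.pos c d γ hc hd
  · -- discriminant group
    let f : (Fin 4 → ℤ) →ₗ[ℤ] ZMod p × ZMod p :=
    { toFun := fun x => ((((x 2 : ℤ) : ZMod p)),
        (((γ * x 0 - 2*γ*x 1 + (q:ℤ) * x 3 : ℤ) : ZMod p))),
      map_add' := by
        intro x y
        simp only [Pi.add_apply, Prod.mk_add_mk, Prod.mk.injEq]
        constructor <;> (push_cast; ring)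
      map_smul' := by
        intro m x
        simp only [Pi.smul_apply, smul_eq_mul, RingHom.id_apply, Prod.smul_mk, zsmul_eq_mul,
          Prod.mk.injEq]
        constructor <;> (push_cast; ring) }
    have hker : LinearMap.range (Matrix.toLin' (HGram p q γ)) = LinearMap.ker f := by
      apply le_antisymm
      · rintro x ⟨y, rfl⟩
        have h2 : ((Matrix.toLin' (HGram p q γ)) y) 2 = (p:ℤ) * (-(c * y 2 + y 3)) := by
          rw [hM]
          simp [Matrix.toLin'_apply, Matrix.mulVec, dotProduct, Fin.sum_univ_four,
            Matrix.vecHead, Matrix.vecTail]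
          ring
        have hl2 : γ * ((Matrix.toLin' (HGram p q γ)) y) 0
            - 2*γ*((Matrix.toLin' (HGram p q γ)) y) 1
            + (q:ℤ) * ((Matrix.toLin' (HGram p q γ)) y) 3
            = (p:ℤ) * (-((q:ℤ) * y 2 + 2 * y 3)) := by
          rw [hM]
          simp [Matrix.toLin'_apply, Matrix.mulVec, dotProduct, Fin.sum_univ_four,
            Matrix.vecHead, Matrix.vecTail]
          linear_combination (-γ * y 1) * hc + 2 * y 3 * hd
        simp only [LinearMap.mem_ker, LinearMap.coe_mk, AddHom.coe_mk, Prod.mk_eq_zero, f]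
        constructor
        · rw [h2, ZMod.intCast_zmod_eq_zero_iff_dvd]
          exact Dvd.intro _ rfl
        · rw [hl2, ZMod.intCast_zmod_eq_zero_iff_dvd]
          exact Dvd.intro _ rfl
      · rintro x hx
        simp only [LinearMap.mem_ker, LinearMap.coe_mk, AddHom.coe_mk, Prod.mk_eq_zero, f] at hx
        obtain ⟨hx1, hx2⟩ := hx
        rw [ZMod.intCast_zmod_eq_zero_iff_dvd] at hx1 hx2
        obtain ⟨a, ha⟩ := hx1
        obtain ⟨b, hb⟩ := hx2
        have hqpR : (q:ℤ) ∣ (p:ℤ) * (c * x 0 - x 1 + γ * (a - c * (2*a - b))) := by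
          refine ⟨c*d*x 0 - (d + γ^2)*x 1 - γ*x 2 + c*γ*x 3, ?_⟩
          linear_combination (c*x 0 - x 1) * hd + (γ^2 * x 1 + γ * x 2) * hc
            + γ*(2*c - 1) * ha - γ*c * hb
        have hqR : (q:ℤ) ∣ (c * x 0 - x 1 + γ * (a - c * (2*a - b))) :=
          hcop.dvd_of_dvd_mul_left hqpR
        obtain ⟨y0, hy0⟩ := hqR
        have hNz : (!![2, 1, 0, 0; 1, c, 0, γ; 0, 0, (p:ℤ)*c, (p:ℤ); 0, γ, (p:ℤ), 2*d]) *ᵥ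
            ![y0, x 0 - 2*y0, 2*a - b, a - c*(2*a - b)] = x := by
          funext i
          fin_cases i
          · simp [Matrix.mulVec, dotProduct, Fin.sum_univ_four, Matrix.vecHead,
              Matrix.vecTail]
            try ring
          · simp [Matrix.mulVec, dotProduct, Fin.sum_univ_four, Matrix.vecHead,
              Matrix.vecTail]
            linear_combination hy0 + y0 * hc
          · simp [Matrix.mulVec, dotProduct, Fin.sum_univ_four, Matrix.vecHead,
              Matrix.vecTail]
            linear_combination -ha
          · simp [Matrix.mulVec, dotProduct, Fin.sum_univ_four, Matrix.vecHead,
              Matrix.vecTail]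
            have hq3 : (q:ℤ) * (γ*(x 0 - 2*y0) + (p:ℤ)*(2*a-b) + 2*d*(a - c*(2*a - b)))
                = (q:ℤ) * x 3 := by
              linear_combination (2*γ) * hy0 + (-2*(a - c*(2*a - b))) * hd
                + (γ*x 0 + (p:ℤ)*(2*a - b)) * hc - hb
            have hfin := mul_left_cancel₀ hq0 hq3
            linear_combination hfin
        refine ⟨-![y0, x 0 - 2*y0, 2*a - b, a - c*(2*a - b)], ?_⟩
        rw [Matrix.toLin'_apply, hM, Matrix.neg_mulVec, Matrix.mulVec_neg, neg_neg]
        exact hNz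
    have hsurj : Function.Surjective f := by
      rintro ⟨s, t⟩
      have hqZ : ((q:ℕ) : ZMod p) ≠ 0 := by
        rw [Ne, ZMod.natCast_eq_zero_iff]
        exact hpq'
      refine ⟨![0, 0, ((s.val : ℤ)), (((t * ((q:ℕ) : ZMod p)⁻¹).val : ℤ))], ?_⟩
      have hval : ∀ u : ZMod p, (((u.val : ℤ)) : ZMod p) = u := by
        intro u
        rw [Int.cast_natCast, ZMod.natCast_zmod_val]
      simp only [LinearMap.coe_mk, AddHom.coe_mk, f, Matrix.cons_val_zero, Matrix.cons_val_one,
        Matrix.head_cons, Matrix.cons_val_two, Matrix.cons_val_three, Matrix.vecHead,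
        Matrix.vecTail, Function.comp_apply, Fin.succ_zero_eq_one, Fin.succ_one_eq_two]
      refine Prod.ext ?_ ?_
      · simpa using hval s
      · show ((γ * 0 - 2*γ*0 + (q:ℤ) * ((t * ((q:ℕ) : ZMod p)⁻¹).val : ℤ) : ℤ) : ZMod p) = t
        push_cast
        rw [ZMod.natCast_zmod_val]
        simp only [mul_zero, sub_zero, zero_sub, neg_zero, zero_add]
        rw [mul_comm t, ← mul_assoc, mul_inv_cancel₀ hqZ, one_mul]
    exact ⟨((Submodule.quotEquivOfEq _ _ hker).trans
      ((f.quotKerEquivOfSurjective hsurj))).toAddEquiv⟩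
end

section
/- For every odd prime p there exist a prime q and an integer γ such that q ≡ 3 (mod 8), −q is a quadratic nonresidue modulo p, and γ² + p ≡ 0 (mod q). -/
/-- Dirichlet-based auxiliary lemma: for odd prime `p` and a unit `n : ZMod p`,
there is a prime `q > p` with `q ≡ 3 (mod 8)` and `q ≡ n (mod p)`. -/
lemma exists_prime_three_mod_eight_and_cast (p : ℕ) [hpf : Fact p.Prime] (hp2 : p ≠ 2)
    (n : ZMod p) (hn : IsUnit n) :
    ∃ q : ℕ, q.Prime ∧ q % 8 = 3 ∧ p < q ∧ (q : ZMod p) = n := by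
  have hpodd : Odd p := hpf.out.odd_of_ne_two hp2
  have hcop : Nat.Coprime 8 p := by
    have h2 : Nat.Coprime 2 p := Nat.coprime_two_left.mpr hpodd
    have : Nat.Coprime (2 ^ 3) p := Nat.Coprime.pow_left 3 h2
    simpa using this
  haveI : NeZero (8 * p) := ⟨by have := hpf.out.pos; omega⟩
  set e := ZMod.chineseRemainder hcop with he
  have hu3 : IsUnit ((3 : ZMod 8)) := by decide
  have hupair : IsUnit (((3 : ZMod 8), n) : ZMod 8 × ZMod p) := by
    obtain ⟨u, hu⟩ := hn
    refine isUnit_iff_exists_inv.mpr ⟨((3 : ZMod 8), ((u⁻¹ : (ZMod p)ˣ) : ZMod p)), ?_⟩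
    rw [Prod.mk_mul_mk, Prod.mk_eq_one]
    refine ⟨by decide, ?_⟩
    rw [← hu]
    exact u.mul_inv
  have hua : IsUnit (e.symm (3, n)) := hupair.map e.symm
  obtain ⟨q, hq_gt, hq_prime, hq_mod⟩ :=
    Nat.forall_exists_prime_gt_and_eq_mod hua (8 * p)
  have key : e ((q : ZMod (8 * p))) = ((3 : ZMod 8), n) := by
    rw [hq_mod]; exact e.apply_symm_apply _
  rw [map_natCast] at key
  have h8 : (q : ZMod 8) = 3 := by
    have := congrArg Prod.fst key; simpa using this
  have hpn : (q : ZMod p) = n := by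
    have := congrArg Prod.snd key; simpa using this
  refine ⟨q, hq_prime, ?_, ?_, hpn⟩
  · have : q ≡ 3 [MOD 8] := by
      have : ((q : ℕ) : ZMod 8) = ((3 : ℕ) : ZMod 8) := by exact_mod_cast h8
      exact (ZMod.natCast_eq_natCast_iff _ _ _).mp this
    simpa [Nat.ModEq] using this
  · have hppos := hpf.out.pos
    omega

/-- If `legendreSym q p = -1` with `q ≡ 3 (mod 8)` and `p < q`, then `-p` is a square
mod `q`, yielding the desired `γ`. -/
lemma exists_gamma (p q : ℕ) [Fact p.Prime] [Fact q.Prime] (hq8 : q % 8 = 3)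
    (hpq : p < q) (hqp : legendreSym q (p : ℤ) = -1) :
    ∃ γ : ℤ, (q : ℤ) ∣ γ ^ 2 + (p : ℤ) := by
  have hq4 : q % 4 = 3 := by
    have := Nat.mod_mod_of_dvd q (by norm_num : 4 ∣ 8)
    omega
  have hq2 : q ≠ 2 := by omega
  have h1 : legendreSym q (-(p : ℤ)) = 1 := by
    have hrw : (-(p : ℤ)) = -1 * (p : ℤ) := by ring
    rw [hrw, legendreSym.mul, legendreSym.at_neg_one hq2, ZMod.χ₄_nat_three_mod_four hq4, hqp]
    norm_num
  have hne : (((-(p : ℤ)) : ℤ) : ZMod q) ≠ 0 := by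
    rw [Int.cast_neg, Int.cast_natCast, neg_ne_zero, Ne, ZMod.natCast_eq_zero_iff]
    intro hdvd
    have := Nat.le_of_dvd (Fact.out : p.Prime).pos hdvd
    omega
  obtain ⟨x, hx⟩ := (legendreSym.eq_one_iff q hne).mp h1
  refine ⟨(x.val : ℤ), ?_⟩
  rw [← ZMod.intCast_zmod_eq_zero_iff_dvd]
  push_cast at hx ⊢
  rw [ZMod.natCast_val, ZMod.cast_id, pow_two, ← hx]
  ring

/-- For every odd prime `p` there exist a prime `q` and an integer `γ` such that
`q ≡ 3 (mod 8)`, `-q` is a quadratic nonresidue modulo `p`, and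
`γ² + p ≡ 0 (mod q)`. -/
theorem exists_auxiliary_prime (p : ℕ) (hp : p.Prime) (hpodd : Odd p) :
    ∃ (q : ℕ) (γ : ℤ), q.Prime ∧ q % 8 = 3 ∧ ¬ IsSquare (-(q : ZMod p)) ∧
      (q : ℤ) ∣ γ ^ 2 + (p : ℤ) := by
  haveI : Fact p.Prime := ⟨hp⟩
  have hpm2 : p % 2 = 1 := Nat.odd_iff.mp hpodd
  have hp2 : p ≠ 2 := by omega
  have hp4 : p % 4 = 1 ∨ p % 4 = 3 := by omega
  rcases hp4 with hp4 | hp4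
  · -- p ≡ 1 (mod 4): -1 is a square mod p, pick n a nonsquare
    have hsq : IsSquare (-1 : ZMod p) := (ZMod.exists_sq_eq_neg_one_iff).mpr (by omega)
    obtain ⟨n, hn⟩ := FiniteField.exists_nonsquare (F := ZMod p)
      (by rw [ZMod.ringChar_zmod_n]; exact hp2)
    have hn0 : n ≠ 0 := by rintro rfl; exact hn ⟨0, by ring⟩
    obtain ⟨q, hqprime, hq8, hpq, hqn⟩ :=
      exists_prime_three_mod_eight_and_cast p hp2 n (isUnit_iff_ne_zero.mpr hn0)
    haveI : Fact q.Prime := ⟨hqprime⟩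
    have hlegpq : legendreSym p (q : ℤ) = -1 :=
      (legendreSym.eq_neg_one_iff p).mpr (by rwa [Int.cast_natCast, hqn])
    have hlegqp : legendreSym q (p : ℤ) = -1 := by
      rw [legendreSym.quadratic_reciprocity_one_mod_four hp4 (by omega : q ≠ 2)]
      exact hlegpq
    obtain ⟨γ, hγ⟩ := exists_gamma p q hq8 hpq hlegqp
    refine ⟨q, γ, hqprime, hq8, ?_, hγ⟩
    rw [hqn]
    intro h
    exact hn (by simpa using hsq.mul h)
  · -- p ≡ 3 (mod 4): -1 is a nonsquare mod p, pick n = 1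
    obtain ⟨q, hqprime, hq8, hpq, hqn⟩ :=
      exists_prime_three_mod_eight_and_cast p hp2 1 isUnit_one
    haveI : Fact q.Prime := ⟨hqprime⟩
    have hq4 : q % 4 = 3 := by
      have := Nat.mod_mod_of_dvd q (by norm_num : 4 ∣ 8)
      omega
    have hlegpq : legendreSym p (q : ℤ) = 1 := by
      refine (legendreSym.eq_one_iff p ?_).mpr ?_
      · rw [Int.cast_natCast, hqn]; exact one_ne_zero
      · rw [Int.cast_natCast, hqn]; exact IsSquare.one
    have hlegqp : legendreSym q (p : ℤ) = -1 := by
      rw [legendreSym.quadratic_reciprocity_three_mod_four hp4 hq4, hlegpq]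
    obtain ⟨γ, hγ⟩ := exists_gamma p q hq8 hpq hlegqp
    refine ⟨q, γ, hqprime, hq8, ?_, hγ⟩
    rw [hqn]
    intro h
    have : IsSquare (-1 : ZMod p) := by simpa using h
    exact (by omega : ¬ p % 4 ≠ 3) ((ZMod.exists_sq_eq_neg_one_iff).mp this)
end
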